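/- Take r = −1/2 and s = i/2, and define for smooth f : ℝ² → ℂ: h f = −x ∂_x f − 2t ∂_t f − (1/2) f, e⁺ f = −∂_t f, e⁻ f = t x ∂_x f + t² ∂_t f − ((i/2) x² − (1/2) t) f, Ω f = (1/2)h(h f) − h f + 2e⁺(e⁻ f), and Ω' f = 2 Ω f + (3/4) f. Then (i) for every smooth f and all (t,x): (Ω' f)(t,x) = x² ( 2i ∂_t f(t,x) + ∂_x² f(t,x) ); and (ii) consequently, for every λ ∈ ℂ, a smooth f satisfies Ω' f = 2λ f at a point (t,x) with x ≠ 0 if and only if 2i ∂_t f(t,x) + ∂_x² f(t,x) = (2λ/x²) f(t,x). -/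

import Mathlib

open Complex

/-- Partial derivative in the first (time) variable. -/
noncomputable def pderivT (f : ℝ → ℝ → ℂ) (t x : ℝ) : ℂ := deriv (fun t' => f t' x) t

/-- Partial derivative in the second (space) variable. -/
noncomputable def pderivX (f : ℝ → ℝ → ℂ) (t x : ℝ) : ℂ := deriv (fun x' => f t x') x

/-- Second partial derivative in the space variable. -/
noncomputable def pderivXX (f : ℝ → ℝ → ℂ) (t x : ℝ) : ℂ :=
  deriv (deriv (fun x' => f t x')) x

/-- `h f = -x ∂_x f - 2t ∂_t f - (1/2) f`  (the case `r = -1/2`). -/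
noncomputable def Hop (f : ℝ → ℝ → ℂ) (t x : ℝ) : ℂ :=
  -(x : ℂ) * pderivX f t x - 2 * (t : ℂ) * pderivT f t x - (1/2 : ℂ) * f t x

/-- `e⁺ f = -∂_t f`. -/
noncomputable def Eplus (f : ℝ → ℝ → ℂ) (t x : ℝ) : ℂ := -pderivT f t x

/-- `e⁻ f = t x ∂_x f + t² ∂_t f - ((i/2) x² - (1/2) t) f`  (the case `s = i/2`, `r = -1/2`). -/
noncomputable def Eminus (f : ℝ → ℝ → ℂ) (t x : ℝ) : ℂ :=
  (t : ℂ) * (x : ℂ) * pderivX f t x + (t : ℂ) ^ 2 * pderivT f t x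
    - ((I / 2) * (x : ℂ) ^ 2 - (1/2 : ℂ) * (t : ℂ)) * f t x

/-- `Ω f = (1/2) h(h f) - h f + 2 e⁺(e⁻ f)`. -/
noncomputable def OmegaNC (f : ℝ → ℝ → ℂ) (t x : ℝ) : ℂ :=
  (1/2 : ℂ) * Hop (fun t' x' => Hop f t' x') t x - Hop f t x
    + 2 * Eplus (fun t' x' => Eminus f t' x') t x

/-- `Ω' f = 2 Ω f + (3/4) f`. -/
noncomputable def OmegaNC' (f : ℝ → ℝ → ℂ) (t x : ℝ) : ℂ :=
  2 * OmegaNC f t x + (3/4 : ℂ) * f t x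

/-- Derivative along the first coordinate of a smooth function on `ℝ × ℝ`. -/
lemma csk_hasDerivAt_left (G : ℝ × ℝ → ℂ) (hG : ContDiff ℝ (⊤ : ℕ∞) G) (t x : ℝ) :
    HasDerivAt (fun t' => G (t', x)) (fderiv ℝ G (t, x) (1, 0)) t := by
  have h1 : HasDerivAt (fun t' : ℝ => ((t', x) : ℝ × ℝ)) (((1 : ℝ), (0 : ℝ)) : ℝ × ℝ) t :=
    (hasDerivAt_id t).prodMk (hasDerivAt_const t x)
  exact ((hG.differentiable (by simp) (t, x)).hasFDerivAt.comp_hasDerivAt_of_eq _ h1 rfl)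

/-- Derivative along the second coordinate of a smooth function on `ℝ × ℝ`. -/
lemma csk_hasDerivAt_right (G : ℝ × ℝ → ℂ) (hG : ContDiff ℝ (⊤ : ℕ∞) G) (t x : ℝ) :
    HasDerivAt (fun x' => G (t, x')) (fderiv ℝ G (t, x) (0, 1)) x := by
  have h1 : HasDerivAt (fun x' : ℝ => ((t, x') : ℝ × ℝ)) (((0 : ℝ), (1 : ℝ)) : ℝ × ℝ) x :=
    (hasDerivAt_const x t).prodMk (hasDerivAt_id x)
  exact ((hG.differentiable (by simp) (t, x)).hasFDerivAt.comp_hasDerivAt_of_eq _ h1 rfl)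

lemma csk_hre (y : ℝ) : HasDerivAt (fun y' : ℝ => (y' : ℂ)) 1 y := by
  simpa using (hasDerivAt_id y).ofReal_comp

/-- For `r = -1/2`, `s = i/2`: (i) `Ω' f = x²(2i ∂_t f + ∂_x² f)`, and (ii) consequently,
away from `x = 0`, `Ω' f = 2λ f` iff `2i ∂_t f + ∂_x² f = (2λ/x²) f`. -/
theorem casimir_schrodinger_kernel
    (f : ℝ → ℝ → ℂ) (hf : ContDiff ℝ (⊤ : ℕ∞) (fun p : ℝ × ℝ => f p.1 p.2)) :
    (∀ t x : ℝ, OmegaNC' f t x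
        = (x : ℂ) ^ 2 * (2 * I * pderivT f t x + pderivXX f t x)) ∧
    (∀ (lam : ℂ) (t x : ℝ), x ≠ 0 →
        (OmegaNC' f t x = 2 * lam * f t x ↔
          2 * I * pderivT f t x + pderivXX f t x = (2 * lam / (x : ℂ) ^ 2) * f t x)) := by
  set F : ℝ × ℝ → ℂ := fun p => f p.1 p.2 with hFdef
  have hF : ContDiff ℝ (⊤ : ℕ∞) F := hf
  set A : ℝ × ℝ → ℂ := fun p => fderiv ℝ F p ((1 : ℝ), (0 : ℝ)) with hAdef
  set B : ℝ × ℝ → ℂ := fun p => fderiv ℝ F p ((0 : ℝ), (1 : ℝ)) with hBdef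
  have hA : ContDiff ℝ (⊤ : ℕ∞) A := (hF.fderiv_right (by simp)).clm_apply contDiff_const
  have hB : ContDiff ℝ (⊤ : ℕ∞) B := (hF.fderiv_right (by simp)).clm_apply contDiff_const
  have pT : ∀ t x : ℝ, pderivT f t x = A (t, x) := fun t x =>
    (csk_hasDerivAt_left F hF t x).deriv
  have pX : ∀ t x : ℝ, pderivX f t x = B (t, x) := fun t x =>
    (csk_hasDerivAt_right F hF t x).deriv
  have clair : ∀ t x : ℝ,
      fderiv ℝ A (t, x) ((0 : ℝ), (1 : ℝ)) = fderiv ℝ B (t, x) ((1 : ℝ), (0 : ℝ)) := by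
    intro t x
    have hdF : DifferentiableAt ℝ (fderiv ℝ F) (t, x) :=
      ((hF.fderiv_right (m := (⊤ : ℕ∞)) (by simp)).differentiable (by simp)) (t, x)
    have hsym : IsSymmSndFDerivAt ℝ F (t, x) :=
      hF.contDiffAt.isSymmSndFDerivAt (by rw [minSmoothness_of_isRCLikeNormedField]; exact WithTop.coe_le_coe.mpr (le_top : (2 : ℕ∞) ≤ ⊤))
    rw [hAdef, hBdef, fderiv_clm_apply hdF (differentiableAt_const _),
        fderiv_clm_apply hdF (differentiableAt_const _)]
    simp [hsym.eq ((0 : ℝ), (1 : ℝ)) ((1 : ℝ), (0 : ℝ))]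
  have key : ∀ t x : ℝ, OmegaNC' f t x
      = (x : ℂ) ^ 2 * (2 * I * pderivT f t x + pderivXX f t x) := by
    intro t x
    have hftT : HasDerivAt (fun t' => f t' x) (A (t, x)) t := csk_hasDerivAt_left F hF t x
    have hftX : HasDerivAt (fun x' => f t x') (B (t, x)) x := csk_hasDerivAt_right F hF t x
    have hAT := csk_hasDerivAt_left A hA t x
    have hAX := csk_hasDerivAt_right A hA t x
    have hBT := csk_hasDerivAt_left B hB t x
    have hBX := csk_hasDerivAt_right B hB t x
    -- second x-derivative
    have e1 : (deriv fun x' => f t x') = fun y => B (t, y) :=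
      funext fun y => (csk_hasDerivAt_right F hF t y).deriv
    have e_pXX : pderivXX f t x = fderiv ℝ B (t, x) ((0 : ℝ), (1 : ℝ)) := by
      show deriv (deriv fun x' => f t x') x = _
      rw [e1]
      exact hBX.deriv
    -- x-derivative of `Hop f`
    have funX : (fun x' => Hop f t x')
        = fun x' : ℝ => -(x' : ℂ) * B (t, x') - 2 * (t : ℂ) * A (t, x') - (1/2 : ℂ) * f t x' := by
      funext x'
      unfold Hop
      rw [pT, pX]
    have DhopX : HasDerivAt (fun x' => Hop f t x')
        ((-1 * B (t, x) + -(x : ℂ) * fderiv ℝ B (t, x) ((0 : ℝ), (1 : ℝ)))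
          - 2 * (t : ℂ) * fderiv ℝ A (t, x) ((0 : ℝ), (1 : ℝ))
          - (1/2 : ℂ) * B (t, x)) x := by
      rw [funX]
      exact (((csk_hre x).neg.mul hBX).sub (hAX.const_mul (2 * (t : ℂ)))).sub
        (hftX.const_mul (1/2 : ℂ))
    have e_hopX : pderivX (fun t' x' => Hop f t' x') t x
        = (-1 * B (t, x) + -(x : ℂ) * fderiv ℝ B (t, x) ((0 : ℝ), (1 : ℝ)))
          - 2 * (t : ℂ) * fderiv ℝ A (t, x) ((0 : ℝ), (1 : ℝ))
          - (1/2 : ℂ) * B (t, x) := DhopX.deriv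
    -- t-derivative of `Hop f`
    have funT : (fun t' => Hop f t' x)
        = fun t' : ℝ => -(x : ℂ) * B (t', x) - 2 * (t' : ℂ) * A (t', x) - (1/2 : ℂ) * f t' x := by
      funext t'
      unfold Hop
      rw [pT, pX]
    have DhopT : HasDerivAt (fun t' => Hop f t' x)
        (-(x : ℂ) * fderiv ℝ B (t, x) ((1 : ℝ), (0 : ℝ))
          - (2 * 1 * A (t, x) + 2 * (t : ℂ) * fderiv ℝ A (t, x) ((1 : ℝ), (0 : ℝ)))
          - (1/2 : ℂ) * A (t, x)) t := by
      rw [funT]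
      exact ((hBT.const_mul (-(x : ℂ))).sub (((csk_hre t).const_mul (2 : ℂ)).mul hAT)).sub
        (hftT.const_mul (1/2 : ℂ))
    have e_hopT : pderivT (fun t' x' => Hop f t' x') t x
        = -(x : ℂ) * fderiv ℝ B (t, x) ((1 : ℝ), (0 : ℝ))
          - (2 * 1 * A (t, x) + 2 * (t : ℂ) * fderiv ℝ A (t, x) ((1 : ℝ), (0 : ℝ)))
          - (1/2 : ℂ) * A (t, x) := DhopT.deriv
    -- t-derivative of `Eminus f`
    have funE : (fun t' => Eminus f t' x)
        = fun t' : ℝ => (t' : ℂ) * (x : ℂ) * B (t', x) + (t' : ℂ) ^ 2 * A (t', x)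
          - ((I / 2) * (x : ℂ) ^ 2 - (1/2 : ℂ) * (t' : ℂ)) * f t' x := by
      funext t'
      unfold Eminus
      rw [pT, pX]
    have DemT : HasDerivAt (fun t' => Eminus f t' x)
        ((x : ℂ) * B (t, x) + (t : ℂ) * (x : ℂ) * fderiv ℝ B (t, x) ((1 : ℝ), (0 : ℝ))
          + 2 * (t : ℂ) * A (t, x) + (t : ℂ) ^ 2 * fderiv ℝ A (t, x) ((1 : ℝ), (0 : ℝ))
          + (1/2 : ℂ) * f t x
          - ((I / 2) * (x : ℂ) ^ 2 - (1/2 : ℂ) * (t : ℂ)) * A (t, x)) t := by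
      rw [funE]
      have h := ((((csk_hre t).mul_const ((x : ℂ))).mul hBT).add
          ((((hasDerivAt_pow 2 ((t : ℝ) : ℂ)).comp_ofReal)).mul hAT)).sub
          (((hasDerivAt_const t ((I / 2) * (x : ℂ) ^ 2)).sub
              ((csk_hre t).const_mul (1/2 : ℂ))).mul hftT)
      refine h.congr_deriv ?_
      simp only [Pi.sub_apply]
      push_cast
      ring
    have e_emT : pderivT (fun t' x' => Eminus f t' x') t x
        = (x : ℂ) * B (t, x) + (t : ℂ) * (x : ℂ) * fderiv ℝ B (t, x) ((1 : ℝ), (0 : ℝ))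
          + 2 * (t : ℂ) * A (t, x) + (t : ℂ) ^ 2 * fderiv ℝ A (t, x) ((1 : ℝ), (0 : ℝ))
          + (1/2 : ℂ) * f t x
          - ((I / 2) * (x : ℂ) ^ 2 - (1/2 : ℂ) * (t : ℂ)) * A (t, x) := DemT.deriv
    -- assemble
    have u1 : OmegaNC' f t x = 2 * OmegaNC f t x + (3/4 : ℂ) * f t x := rfl
    have u2 : OmegaNC f t x = (1/2 : ℂ) * Hop (fun t' x' => Hop f t' x') t x - Hop f t x
        + 2 * Eplus (fun t' x' => Eminus f t' x') t x := rfl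
    have u3 : Hop (fun t' x' => Hop f t' x') t x
        = -(x : ℂ) * pderivX (fun t' x' => Hop f t' x') t x
          - 2 * (t : ℂ) * pderivT (fun t' x' => Hop f t' x') t x
          - (1/2 : ℂ) * Hop f t x := rfl
    have u4 : Eplus (fun t' x' => Eminus f t' x') t x
        = -pderivT (fun t' x' => Eminus f t' x') t x := rfl
    have u5 : Hop f t x
        = -(x : ℂ) * pderivX f t x - 2 * (t : ℂ) * pderivT f t x - (1/2 : ℂ) * f t x := rfl
    rw [u1, u2, u3, u4, u5, e_hopX, e_hopT, e_emT, e_pXX, pT, pX, clair t x]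
    ring
  refine ⟨key, fun lam t x hx => ?_⟩
  have hx2 : ((x : ℂ)) ^ 2 ≠ 0 := pow_ne_zero 2 (by exact_mod_cast hx)
  rw [key t x]
  constructor
  · intro h
    rw [div_mul_eq_mul_div, eq_div_iff hx2]
    linear_combination h
  · intro h
    rw [div_mul_eq_mul_div, eq_div_iff hx2] at h
    linear_combination h
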